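/- (Tree replacement lemma) In Schelling's segregation model with Markovian contagion, let Y = (y, e₀) be a state of Ω_k whose coloring y is maximally segregated, let X = (x, e_r) be any state of Ω_k, and let T be a tree rooted at X (within Ω_k) of minimal resistance among all trees rooted at X. Then there exists a tree rooted at Y whose resistance is at most the resistance of T, and strictly less if the coloring x is not maximally segregated. -/

import Mathlib

open Classical Filter Finset

noncomputable section

namespace Schelling

variable {V : Type*} [Fintype V] [DecidableEq V]

/-- A coloring assigns `+1` or `-1` to each vertex. -/
def IsColoring (x : V → ℤ) : Prop := ∀ v, x v = 1 ∨ x v = -1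

/-- `wdeg G x i` : number of neighbors of `i` with the same color minus
the number of neighbors with the opposite color. -/
def wdeg (G : SimpleGraph V) (x : V → ℤ) (i : V) : ℤ :=
  ((univ.filter fun j => G.Adj i j ∧ x j = x i).card : ℤ)
    - ((univ.filter fun j => G.Adj i j ∧ x j ≠ x i).card : ℤ)

/-- Utility of agent `i`. -/
def util (G : SimpleGraph V) (r : ℝ) (εc : V → ℝ) (x : V → ℤ) (i : V) : ℝ :=
  r * (wdeg G x i : ℝ) + εc i

/-- The potential `L`. -/
def potential (G : SimpleGraph V) (r : ℝ) (εc : V → ℝ) (x : V → ℤ) : ℝ :=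
  ∑ i, util G r εc x i

/-- Number of bichromatic edges. -/
def bichromCount (G : SimpleGraph V) (x : V → ℤ) : ℕ :=
  (G.edgeFinset.filter fun e =>
    Sym2.lift ⟨fun u v => x u ≠ x v, fun u v => by simp [ne_comm]⟩ e).card

/-- Number of monochromatic edges. -/
def monoCount (G : SimpleGraph V) (x : V → ℤ) : ℕ :=
  (G.edgeFinset.filter fun e =>
    Sym2.lift ⟨fun u v => x u = x v, fun u v => by simp [eq_comm]⟩ e).card

/-- Number of vertices colored `+1`. -/
def plusCount (x : V → ℤ) : ℕ := (univ.filter fun v => x v = 1).card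

/-- A coloring is maximally segregated if it minimizes the number of bichromatic
edges among all colorings with the same number of `+1` vertices. -/
def MaximallySegregated (G : SimpleGraph V) (x : V → ℤ) : Prop :=
  ∀ x' : V → ℤ, IsColoring x' → plusCount x' = plusCount x →
    bichromCount G x ≤ bichromCount G x'

/-- Exchange the values of a coloring at `i` and `j`. -/
def swap (x : V → ℤ) (i j : V) : V → ℤ :=
  fun v => if v = i then x j else if v = j then x i else x v

/-- The resistance of activating pair `e' = (i,j)` in state `x` with outcome `x'`. -/
def resist (G : SimpleGraph V) (r : ℝ) (εc : V → ℝ)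
    (x : V → ℤ) (e' : V × V) (x' : V → ℤ) : ℝ :=
  let y := swap x e'.1 e'.2
  let a := util G r εc x e'.1 + util G r εc x e'.2
  let b := util G r εc y e'.1 + util G r εc y e'.2
  if x' = x then max 0 (b - a) else max 0 (a - b)

/-- The `N × N` torus. -/
def torus (N : ℕ) : SimpleGraph (ZMod N × ZMod N) where
  Adj u v := u ≠ v ∧
    ((u.1 = v.1 ∧ (u.2 = v.2 + 1 ∨ v.2 = u.2 + 1)) ∨
     (u.2 = v.2 ∧ (u.1 = v.1 + 1 ∨ v.1 = u.1 + 1)))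
  symm := by
    constructor
    rintro u v ⟨hne, h⟩
    refine ⟨hne.symm, ?_⟩
    rcases h with ⟨h1, h2⟩ | ⟨h1, h2⟩
    · exact Or.inl ⟨h1.symm, h2.symm⟩
    · exact Or.inr ⟨h1.symm, h2.symm⟩
  loopless := ⟨fun v h => h.1 rfl⟩

/-- Markovian contagion scheduler. -/
def IsScheduler {W : Type*} [Fintype W] (D : (W × W) → (W × W) → ℝ) : Prop :=
  (∀ e e', 0 ≤ D e e') ∧ (∀ e, ∑ e', D e e' = 1) ∧ (∀ e, 0 < D e e) ∧
  (∀ e e', 0 < D e e' ↔ 0 < D e' e) ∧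
  (∀ e e', Relation.ReflTransGen (fun a b => 0 < D a b) e e')

/-- One step transition probability of the chain `M_β`. -/
def kernel (G : SimpleGraph V) (r : ℝ) (εc : V → ℝ)
    (D : (V × V) → (V × V) → ℝ) (β : ℝ) :
    ((V → ℤ) × (V × V)) → ((V → ℤ) × (V × V)) → ℝ :=
  fun s t =>
    let x := s.1; let x' := t.1; let e' := t.2
    let y := swap x e'.1 e'.2
    let a := util G r εc x e'.1 + util G r εc x e'.2
    let b := util G r εc y e'.1 + util G r εc y e'.2
    D s.2 e' *
      ((if x' = y then Real.exp (β * b) / (Real.exp (β * a) + Real.exp (β * b)) else 0)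
       + (if x' = x then Real.exp (β * a) / (Real.exp (β * a) + Real.exp (β * b)) else 0))

/-- The finite set of all ±1 colorings of `V`. -/
def colorings (V : Type*) [Fintype V] [DecidableEq V] : Finset (V → ℤ) :=
  Fintype.piFinset fun _ => ({1, -1} : Finset ℤ)

/-- The set `Ω_k` of states whose coloring has exactly `k` vertices colored `+1`. -/
def Omega (V : Type*) [Fintype V] [DecidableEq V] (k : ℕ) :
    Finset ((V → ℤ) × (V × V)) :=
  ((colorings V).filter fun x => plusCount x = k) ×ˢ (univ : Finset (V × V))

/-- `n`-step transition probabilities of a kernel restricted to a finite set `S` of states. -/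
def kerpow {S : Type*} [DecidableEq S] (K : S → S → ℝ) (A : Finset S) : ℕ → S → S → ℝ
  | 0 => fun s t => if s = t then 1 else 0
  | n + 1 => fun s t => ∑ u ∈ A, kerpow K A n s u * K u t

/-- An admissible transition of the segregation chain. -/
def Adm (D : (V × V) → (V × V) → ℝ)
    (s t : (V → ℤ) × (V × V)) : Prop :=
  0 < D s.2 t.2 ∧ (t.1 = s.1 ∨ t.1 = swap s.1 t.2.1 t.2.2)

/-- Resistance of a transition between states of the chain. -/
def tres (G : SimpleGraph V) (r : ℝ) (εc : V → ℝ)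
    (s t : (V → ℤ) × (V × V)) : ℝ :=
  resist G r εc s.1 t.2 t.1

/-- `pathOK T a z l` : `l` is the list of successive vertices of a directed path
from `a` to `z` using transitions from `T`. -/
def pathOK {S : Type*} (T : Set (S × S)) (a z : S) : List S → Prop
  | [] => a = z
  | b :: l => (a, b) ∈ T ∧ pathOK T b z l

/-- `T` is a tree (within the state set `A`) rooted at `z`. -/
def IsTreeRootedAt {S : Type*} (Adm : S → S → Prop) (A : Finset S)
    (T : Finset (S × S)) (z : S) : Prop :=
  (∀ p ∈ T, p.1 ∈ A ∧ p.2 ∈ A ∧ Adm p.1 p.2) ∧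
  (∀ w ∈ A, w ≠ z → ∃! l : List S, pathOK (↑T : Set (S × S)) w z l)

/-- Resistance of a set of transitions. -/
def treeRes {S : Type*} (ρ : S → S → ℝ) (T : Finset (S × S)) : ℝ :=
  ∑ p ∈ T, ρ p.1 p.2

end Schelling

/-!
A swap changes the joint utility of the two agents by `2 r` times the change in the number `B` of
bichromatic edges, so running an admissible transition backwards (undoing the coloring, replaying
the label) costs its resistance plus the drop of `2 r B`. Reversing in this way the tree path from
`Y` to the root `X` turns a tree rooted at `X` into one rooted at `Y` at extra cost
`2 r (B Y - B X)`, which is `≤ 0` since `Y` is maximally segregated, and `< 0` unless `X` is too.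
The states of the old path must be re-attached for free; this works when the tree has no stay of
positive resistance, and a cheapest tree can be rid of such stays by redirecting each one through
the swap it declines.
-/

lemma Finset.sum_sum_eq_two_nsmul_of_symm {α M : Type*} [Fintype α] [DecidableEq α]
    [AddCommMonoid M] {P : Finset α} {d : α → α → M} (hsymm : ∀ u v, d u v = d v u)
    (hout : ∀ u ∉ P, ∀ v ∉ P, d u v = 0) (hin : ∀ u ∈ P, ∀ v ∈ P, d u v = 0) :
    ∑ u, ∑ v, d u v = 2 • ∑ u ∈ P, ∑ v, d u v := by
  rw [← Finset.sum_add_sum_compl P, two_nsmul]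
  congr 1
  calc ∑ u ∈ Pᶜ, ∑ v, d u v = ∑ u ∈ Pᶜ, ∑ v ∈ P, d u v :=
        Finset.sum_congr rfl fun u hu => (Finset.sum_subset (Finset.subset_univ P)
          fun v _ hv => hout u (Finset.mem_compl.1 hu) v hv).symm
    _ = ∑ v ∈ P, ∑ u ∈ Pᶜ, d v u := by
        rw [Finset.sum_comm]; simp only [hsymm]
    _ = ∑ v ∈ P, ∑ u, d v u :=
        Finset.sum_congr rfl fun v hv => Finset.sum_subset (Finset.subset_univ _)
          fun u _ hu => hin v hv u (by simpa using hu)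

namespace Schelling

section Trees

variable {S : Type*} {f g : S → S} {a b c u v z : S}

abbrev Reaches (f : S → S) : S → S → Prop := Relation.ReflTransGen fun a b => f a = b

lemma Reaches.exists_iterate (h : Reaches f a b) : ∃ n, f^[n] a = b := by
  induction h using Relation.ReflTransGen.head_induction_on with
  | refl => exact ⟨0, rfl⟩
  | head hac _ ih =>
    obtain ⟨n, hn⟩ := ih
    exact ⟨n + 1, by rw [Function.iterate_succ_apply, hac, hn]⟩

lemma Reaches.congr (hfg : ∀ c, Reaches f a c → g c = f c) (h : Reaches f a b) :
    Reaches g a b := by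
  induction h with
  | refl => rfl
  | tail hac hcb ih => exact ih.tail ((hfg _ hac).trans hcb)

lemma Reaches.eq_of_isFixedPt (hz : f z = z) (h : Reaches f z b) : b = z := by
  induction h with
  | refl => rfl
  | tail _ hcd ih => rw [← hcd, ih, hz]

lemma Reaches.reaches_of_cycle (hcyc : Reaches f (f v) v) (h : Reaches f v c) :
    Reaches f c v := by
  induction h with
  | refl => rfl
  | tail _ hcd ih =>
    rw [← hcd]
    rcases Relation.ReflTransGen.cases_head ih with rfl | ⟨_, rfl, h⟩
    exacts [hcyc, h]

lemma not_reaches_apply_self (hz : f z = z) (hv : Reaches f v z) (hvz : v ≠ z) :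
    ¬ Reaches f (f v) v := fun hcyc =>
  hvz ((hcyc.reaches_of_cycle hv).eq_of_isFixedPt hz)

lemma pathOK_append {T : Set (S × S)} {l l' : List S} (h : pathOK T a b l)
    (h' : pathOK T b c l') : pathOK T a c (l ++ l') := by
  induction l generalizing a with
  | nil => obtain rfl : a = b := h; exact h'
  | cons d l ih => exact ⟨h.1, ih h.2⟩

lemma Reaches.of_pathOK {T : Set (S × S)} (hT : ∀ p ∈ T, p.2 = f p.1) {l : List S}
    (h : pathOK T a b l) : Reaches f a b := by
  induction l generalizing a with
  | nil => obtain rfl : a = b := h; rfl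
  | cons d l ih => exact .head (hT _ h.1).symm (ih h.2)

lemma pathOK_unique {T : Set (S × S)} (hT : ∀ p ∈ T, p.1 ≠ b ∧ p.2 = f p.1) {l l' : List S}
    (h : pathOK T a b l) (h' : pathOK T a b l') : l = l' := by
  induction l generalizing a l' with
  | nil =>
    obtain rfl : a = b := h
    cases l' with
    | nil => rfl
    | cons d l' => exact absurd rfl (hT _ h'.1).1
  | cons d l ih =>
    cases l' with
    | nil => obtain rfl : a = b := h'; exact absurd rfl (hT _ h.1).1
    | cons d' l' =>
      obtain rfl : d = f a := (hT _ h.1).2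
      obtain rfl : d' = f a := (hT _ h'.1).2
      rw [ih h.2 h'.2]

structure IsParentMap (Ad : S → S → Prop) (A : Finset S) (z : S) (f : S → S) : Prop where
  mem : ∀ v ∈ A, v ≠ z → f v ∈ A
  adm : ∀ v ∈ A, v ≠ z → Ad v (f v)
  reaches : ∀ v ∈ A, Reaches f v z

variable {Ad : S → S → Prop} {A : Finset S}

lemma IsParentMap.of_agree (hf : IsParentMap Ad A z f) {z' : S} {B : Set S}
    (hB : ∀ v ∈ A, v ∉ B → v ≠ z ∧ g v = f v)
    (hadm : ∀ v ∈ A, v ∈ B → v ≠ z' → g v ∈ A ∧ Ad v (g v))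
    (hreach : ∀ v ∈ A, v ∈ B → Reaches g v z') : IsParentMap Ad A z' g := by
  refine ⟨fun v hv hvz' => ?_, fun v hv hvz' => ?_, fun v hv => ?_⟩
  · by_cases h : v ∈ B
    · exact (hadm v hv h hvz').1
    · exact (hB v hv h).2 ▸ hf.mem v hv (hB v hv h).1
  · by_cases h : v ∈ B
    · exact (hadm v hv h hvz').2
    · exact (hB v hv h).2 ▸ hf.adm v hv (hB v hv h).1
  · induction hf.reaches v hv using Relation.ReflTransGen.head_induction_on with
    | refl => exact hreach _ hv (by_contra fun h => (hB _ hv h).1 rfl)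
    | @head a c hac _ ih =>
      by_cases h : a ∈ B
      · exact hreach a hv h
      · obtain ⟨haz, hga⟩ := hB a hv h
        exact .head (hga.trans hac) (ih (hac ▸ hf.mem a hv haz))

lemma IsParentMap.exists_path (hf : IsParentMap Ad A z f) (ha : a ∈ A) :
    ∃ m, f^[m] a = z ∧ (∀ i ≤ m, f^[i] a ∈ A) ∧ (∀ i < m, f^[i] a ≠ z) ∧
      Set.InjOn (f^[·] a) (Set.Iic m) := by
  classical
  have hex := (hf.reaches a ha).exists_iterate
  have hne : ∀ i < Nat.find hex, f^[i] a ≠ z := fun i hi => Nat.find_min hex hi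
  refine ⟨Nat.find hex, Nat.find_spec hex, fun i hi => ?_, hne, ?_⟩
  · induction i with
    | zero => exact ha
    | succ i ih =>
      rw [Function.iterate_succ_apply']
      exact hf.mem _ (ih (by omega)) (hne i (by omega))
  · -- a repetition `f^[i] a = f^[j] a` with `i < j` would reach `z` before step `Nat.find hex`
    have key : ∀ i j, i < j → j ≤ Nat.find hex → f^[i] a ≠ f^[j] a := by
      intro i j hij hj heq
      apply hne (Nat.find hex - j + i) (by omega)
      rw [Function.iterate_add_apply, heq, ← Function.iterate_add_apply, Nat.sub_add_cancel hj,
        Nat.find_spec hex]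
    intro i hi j hj heq
    rcases lt_trichotomy i j with h | h | h
    · exact absurd heq (key i j h hj)
    · exact h
    · exact absurd heq.symm (key j i h hi)

variable [DecidableEq S] {T : Finset (S × S)}

def treeOf (A : Finset S) (z : S) (f : S → S) : Finset (S × S) :=
  (A.erase z).image fun v => (v, f v)

lemma mem_treeOf {p : S × S} : p ∈ treeOf A z f ↔ p.1 ∈ A ∧ p.1 ≠ z ∧ p.2 = f p.1 := by
  simp only [treeOf, Finset.mem_image, Finset.mem_erase]
  constructor
  · rintro ⟨v, ⟨hvz, hvA⟩, rfl⟩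
    exact ⟨hvA, hvz, rfl⟩
  · rintro ⟨hA, hz, h⟩
    exact ⟨p.1, ⟨hz, hA⟩, Prod.ext rfl h.symm⟩

lemma treeRes_treeOf (ρ : S → S → ℝ) (A : Finset S) (z : S) (f : S → S) :
    treeRes ρ (treeOf A z f) = ∑ v ∈ A.erase z, ρ v (f v) :=
  Finset.sum_image fun _ _ _ _ h => (Prod.ext_iff.1 h).1

lemma IsParentMap.exists_pathOK (hf : IsParentMap Ad A z f) (hv : v ∈ A) :
    ∃ l, pathOK (treeOf A z f : Set (S × S)) v z l := by
  induction hf.reaches v hv using Relation.ReflTransGen.head_induction_on with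
  | refl => exact ⟨[], rfl⟩
  | @head a c hac _ ih =>
    by_cases haz : a = z
    · exact ⟨[], haz⟩
    obtain ⟨l, hl⟩ := ih (hac ▸ hf.mem a hv haz)
    exact ⟨c :: l, mem_treeOf.2 ⟨hv, haz, hac.symm⟩, hl⟩

lemma IsParentMap.isTreeRootedAt (hf : IsParentMap Ad A z f) :
    IsTreeRootedAt Ad A (treeOf A z f) z := by
  refine ⟨fun p hp => ?_, fun w hw _ => ?_⟩
  · obtain ⟨hA, hz, h⟩ := mem_treeOf.1 hp
    exact ⟨hA, h ▸ hf.mem _ hA hz, h ▸ hf.adm _ hA hz⟩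
  · obtain ⟨l, hl⟩ := hf.exists_pathOK hw
    refine ⟨l, hl, fun l' hl' => pathOK_unique (f := f) (fun p hp => ?_) hl' hl⟩
    exact (mem_treeOf.1 hp).2

lemma IsTreeRootedAt.exists_parentMap (hT : IsTreeRootedAt Ad A T z) {w : S} (hw : w ∈ A)
    (hwz : w ≠ z) : ∃ f, IsParentMap Ad A z f ∧ f z = z ∧ T = treeOf A z f := by
  have hpath : ∀ b ∈ A, ∃ l, pathOK (T : Set (S × S)) b z l := fun b hb => by
    by_cases hbz : b = z
    exacts [⟨[], hbz⟩, (hT.2 b hb hbz).exists]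
  -- an edge out of the root would give `w` a second, longer path to `z`
  have hroot : ∀ b, (z, b) ∉ T := by
    intro b hzb
    obtain ⟨lw, hlw⟩ := hpath w hw
    obtain ⟨lb, hlb⟩ := hpath b (hT.1 _ hzb).2.1
    have h := congrArg List.length <| (hT.2 w hw hwz).unique hlw
      (pathOK_append hlw (show pathOK _ z z (b :: lb) from ⟨hzb, hlb⟩))
    simp at h
  have hfun : ∀ a b c, (a, b) ∈ T → (a, c) ∈ T → b = c := by
    intro a b c hab hac
    have haz : a ≠ z := by rintro rfl; exact hroot b hab
    obtain ⟨lb, hlb⟩ := hpath b (hT.1 _ hab).2.1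
    obtain ⟨lc, hlc⟩ := hpath c (hT.1 _ hac).2.1
    exact List.head_eq_of_cons_eq <| (hT.2 a (hT.1 _ hab).1 haz).unique
      (show pathOK _ a z (b :: lb) from ⟨hab, hlb⟩) ⟨hac, hlc⟩
  let f : S → S := fun a => if h : ∃ b, (a, b) ∈ T then h.choose else a
  have hf : ∀ p ∈ T, p.2 = f p.1 := fun p hp => by
    have h : ∃ b, (p.1, b) ∈ T := ⟨p.2, hp⟩
    simp only [f, dif_pos h]
    exact hfun _ _ _ hp h.choose_spec
  have hout : ∀ v ∈ A, v ≠ z → (v, f v) ∈ T := by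
    intro v hv hvz
    obtain ⟨_ | ⟨b, l⟩, hl, -⟩ := hT.2 v hv hvz
    · exact absurd hl hvz
    · exact hf _ hl.1 ▸ hl.1
  refine ⟨f, ⟨fun v hv hvz => (hT.1 _ (hout v hv hvz)).2.1,
    fun v hv hvz => (hT.1 _ (hout v hv hvz)).2.2, fun v hv => ?_⟩, ?_, ?_⟩
  · obtain ⟨l, hl⟩ := hpath v hv
    exact .of_pathOK hf hl
  · exact dif_neg fun ⟨b, hb⟩ => hroot b hb
  · ext p
    rw [mem_treeOf]
    refine ⟨fun hp => ⟨(hT.1 p hp).1, fun h => hroot p.2 (h ▸ hp), hf p hp⟩, ?_⟩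
    rintro ⟨hA, hz, h⟩
    rw [← Prod.mk.eta (p := p), h]
    exact hout _ hA hz

lemma IsParentMap.update (hf : IsParentMap Ad A z f) (hv : v ∈ A) (hu : u ∈ A) (hvu : Ad v u)
    (hloop : ¬ Reaches f u v) : IsParentMap Ad A z (Function.update f v u) := by
  have hgv : Function.update f v u v = u := Function.update_self ..
  have hg : ∀ w, w ≠ v → Function.update f v u w = f w := fun w hw => Function.update_of_ne hw _ _
  refine hf.of_agree (B := {v, z}) (fun w _ hw => ?_) (fun w _ hw hwz => ?_) (fun w _ hw => ?_)
  · simp only [Set.mem_insert_iff, Set.mem_singleton_iff, not_or] at hw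
    exact ⟨hw.2, hg w hw.1⟩
  · rcases hw with rfl | rfl
    · rw [hgv]
      exact ⟨hu, hvu⟩
    · exact absurd rfl hwz
  · rcases hw with rfl | rfl
    · refine .head hgv ((hf.reaches u hu).congr fun c hc => hg c ?_)
      rintro rfl
      exact hloop hc
    · rfl

lemma IsParentMap.update_update (hf : IsParentMap Ad A z f) (hfz : f z = z) (hv : v ∈ A)
    (hvz : v ≠ z) (hu : u ∈ A) (huv : u ≠ v) (hvu : Ad v u) (hut : Ad u (f v))
    (hloop : Reaches f u v) :
    IsParentMap Ad A z (Function.update (Function.update f v u) u (f v)) := by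
  set g := Function.update (Function.update f v u) u (f v)
  have hgv : g v = u := (Function.update_of_ne huv.symm _ _).trans (Function.update_self ..)
  have hgu : g u = f v := Function.update_self ..
  have hg : ∀ w, w ≠ v → w ≠ u → g w = f w := fun w hwv hwu =>
    (Function.update_of_ne hwu _ _).trans (Function.update_of_ne hwv _ _)
  -- the `f`-path from `f v` to `z` meets neither `v` (no cycles) nor `u` (which leads to `v`)
  have hnocyc := not_reaches_apply_self hfz (hf.reaches v hv) hvz
  have hfv : Reaches g (f v) z := (hf.reaches _ (hf.mem v hv hvz)).congr fun c hc =>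
    hg c (fun h => hnocyc (h ▸ hc)) fun h => hnocyc ((h ▸ hc).trans hloop)
  refine hf.of_agree (B := {v, u, z}) (fun w _ hw => ?_) (fun w _ hw hwz => ?_) (fun w _ hw => ?_)
  · simp only [Set.mem_insert_iff, Set.mem_singleton_iff, not_or] at hw
    exact ⟨hw.2.2, hg w hw.1 hw.2.1⟩
  · rcases hw with rfl | rfl | rfl
    · exact hgv ▸ ⟨hu, hvu⟩
    · exact hgu ▸ ⟨hf.mem _ hv hvz, hut⟩
    · exact absurd rfl hwz
  · rcases hw with rfl | rfl | rfl
    · exact .head hgv (.head hgu hfv)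
    · exact .head hgu hfv
    · rfl

lemma sum_update_add {B : Finset S} (ρ : S → S → ℝ) (f : S → S) (hv : v ∈ B) (b : S) :
    ∑ w ∈ B, ρ w (Function.update f v b w) + ρ v (f v) = ∑ w ∈ B, ρ w (f w) + ρ v b := by
  rw [← Finset.add_sum_erase _ _ hv, ← Finset.add_sum_erase _ _ hv, Function.update_self,
    Finset.sum_congr rfl fun w hw => by rw [Function.update_of_ne (Finset.ne_of_mem_erase hw)]]
  ring

end Trees

section Walks

variable {S : Type*} {q : ℕ → S} {g : S → S} {i : ℕ}

def firstVisit (q : ℕ → S) (v : S) : ℕ := if h : ∃ i, q i = v then Nat.find h else 0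

/-- The step out of `v` of the loop-erased walk `q n → q (n - 1) → ⋯ → q 0`: jump to the first
visit of `v` and step once from there. -/
def walkSucc (q : ℕ → S) (v : S) : S := q (firstVisit q v - 1)

lemma firstVisit_spec (hi : q i ≠ q 0) :
    firstVisit q (q i) - 1 < i ∧ q (firstVisit q (q i) - 1 + 1) = q i := by
  have h : ∃ j, q j = q i := ⟨i, rfl⟩
  simp only [firstVisit, dif_pos h]
  have hpos : Nat.find h ≠ 0 := fun h0 => hi (by rw [← Nat.find_spec h, h0])
  have := Nat.find_min' h rfl
  exact ⟨by omega, by rw [Nat.sub_add_cancel (by omega), Nat.find_spec h]⟩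

lemma exists_walkSucc_eq (hi : q i ≠ q 0) :
    ∃ j < i, q (j + 1) = q i ∧ walkSucc q (q i) = q j :=
  ⟨_, (firstVisit_spec hi).1, (firstVisit_spec hi).2, rfl⟩

lemma reaches_walk {n : ℕ} (hg : ∀ i ≤ n, q i ≠ q 0 → g (q i) = walkSucc q (q i)) :
    ∀ i ≤ n, Reaches g (q i) (q 0) := by
  intro i
  induction i using Nat.strong_induction_on with
  | _ i ih =>
    intro hi
    by_cases h0 : q i = q 0
    · rw [h0]
    · have hlt := (firstVisit_spec h0).1
      exact .head (hg i hi h0) (ih _ hlt (by omega))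

lemma sum_walkSucc_le [DecidableEq S] {ρ : S → S → ℝ} (hρ : ∀ a b, 0 ≤ ρ a b) (q : ℕ → S)
    (n : ℕ) : ∑ v ∈ ((range (n + 1)).image q).erase (q 0), ρ v (walkSucc q v) ≤
      ∑ j ∈ range n, ρ (q (j + 1)) (q j) := by
  set R := ((range (n + 1)).image q).erase (q 0)
  have key : ∀ v ∈ R, firstVisit q v - 1 < n ∧ q (firstVisit q v - 1 + 1) = v := by
    intro v hv
    obtain ⟨hv0, hv⟩ := Finset.mem_erase.1 hv
    obtain ⟨i, hi, rfl⟩ := Finset.mem_image.1 hv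
    have := firstVisit_spec hv0
    exact ⟨by rw [Finset.mem_range] at hi; omega, this.2⟩
  calc ∑ v ∈ R, ρ v (walkSucc q v)
      = ∑ v ∈ R, ρ (q (firstVisit q v - 1 + 1)) (q (firstVisit q v - 1)) :=
        Finset.sum_congr rfl fun v hv => by rw [(key v hv).2, walkSucc]
    _ = ∑ j ∈ R.image (firstVisit q · - 1), ρ (q (j + 1)) (q j) :=
        (Finset.sum_image (f := fun j => ρ (q (j + 1)) (q j)) fun v hv w hw h => by
          rw [← (key v hv).2, ← (key w hw).2]; exact congrArg (q <| · + 1) h).symm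
    _ ≤ ∑ j ∈ range n, ρ (q (j + 1)) (q j) := by
        refine Finset.sum_le_sum_of_subset_of_nonneg (fun j hj => ?_) fun _ _ _ => hρ _ _
        obtain ⟨v, hv, rfl⟩ := Finset.mem_image.1 hj
        exact Finset.mem_range.2 (key v hv).1

variable [DecidableEq S] {Ad : S → S → Prop} {A : Finset S} {z : S} {f h : S → S} {n : ℕ}

def reroute (q : ℕ → S) (n : ℕ) (W : Finset S) (h f : S → S) : S → S :=
  ((range (n + 1)).image q).piecewise (walkSucc q) (W.piecewise h f)

lemma IsParentMap.reroute (hf : IsParentMap Ad A z f) (hqA : ∀ i ≤ n, q i ∈ A)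
    (hqAd : ∀ i < n, Ad (q (i + 1)) (q i)) (hqz : q n = z) {w : ℕ → S} {m : ℕ} (hwm : w m = z)
    (hh : ∀ i < m, h (w i) ∈ A ∧ Ad (w i) (h (w i)) ∧
      (h (w i) = w (i + 1) ∨ h (w i) ∈ (range (n + 1)).image q)) :
    IsParentMap Ad A (q 0) (reroute q n ((range m).image w) h f) := by
  set R := (range (n + 1)).image q
  set W := (range m).image w
  set g := Schelling.reroute q n W h f
  have hg_off : ∀ v ∉ R, g v = W.piecewise h f v := fun v hv =>
    Finset.piecewise_eq_of_notMem _ _ _ hv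
  have hg_walk : ∀ i ≤ n, g (q i) = walkSucc q (q i) := fun i hi =>
    Finset.piecewise_eq_of_mem _ _ _ (Finset.mem_image_of_mem q (Finset.mem_range.2 (by omega)))
  have hR : ∀ v ∈ R, ∃ i ≤ n, q i = v := fun v hv => by
    obtain ⟨i, hi, rfl⟩ := Finset.mem_image.1 hv
    exact ⟨i, by rw [Finset.mem_range] at hi; omega, rfl⟩
  have hRreach : ∀ v ∈ R, Reaches g v (q 0) := fun v hv => by
    obtain ⟨i, hi, rfl⟩ := hR v hv
    exact reaches_walk (fun i hi _ => hg_walk i hi) i hi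
  have hWreach : ∀ i ≤ m, Reaches g (w i) (q 0) := by
    intro i hi
    induction hi using Nat.decreasingInduction with
    | self => exact hRreach _ (hwm ▸ hqz ▸ Finset.mem_image_of_mem q (by simp))
    | of_succ i him ih =>
      by_cases hwR : w i ∈ R
      · exact hRreach _ hwR
      have hgw : g (w i) = h (w i) := by
        rw [hg_off _ hwR, Finset.piecewise_eq_of_mem]
        exact Finset.mem_image_of_mem w (Finset.mem_range.2 him)
      rcases (hh i him).2.2 with hnext | hnext
      · exact .head (hgw.trans hnext) ih
      · exact .head hgw (hRreach _ hnext)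
  refine hf.of_agree (B := ↑R ∪ ↑W) (fun v _ hv => ?_) (fun v _ hv hv0 => ?_) (fun v _ hv => ?_)
  · simp only [Set.mem_union, Finset.mem_coe, not_or] at hv
    refine ⟨fun hvz => hv.1 (hvz ▸ hqz ▸ Finset.mem_image_of_mem q (by simp)), ?_⟩
    rw [hg_off _ hv.1, Finset.piecewise_eq_of_notMem _ _ _ hv.2]
  · by_cases hvR : v ∈ R
    · obtain ⟨i, hi, rfl⟩ := hR v hvR
      obtain ⟨j, hji, hqj, hsucc⟩ := exists_walkSucc_eq hv0
      rw [hg_walk i hi, hsucc, ← hqj]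
      exact ⟨hqA _ (by omega), hqAd _ (by omega)⟩
    · obtain ⟨i, hi, rfl⟩ := Finset.mem_image.1 ((Set.mem_union _ _ _).1 hv |>.resolve_left hvR)
      have him := Finset.mem_range.1 hi
      rw [hg_off _ hvR, Finset.piecewise_eq_of_mem _ _ _ (Finset.mem_image_of_mem w hi)]
      exact ⟨(hh i him).1, (hh i him).2.1⟩
  · rcases hv with hvR | hvW
    · exact hRreach v hvR
    · obtain ⟨i, hi, rfl⟩ := Finset.mem_image.1 hvW
      exact hWreach i (Finset.mem_range.1 hi).le

lemma sum_reroute_le {ρ : S → S → ℝ} (hρ : ∀ a b, 0 ≤ ρ a b) (q : ℕ → S)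
    (hz : z ∈ (range (n + 1)).image q) {W : Finset S} (hW : W ⊆ A.erase z)
    (hh : ∀ v ∈ W, ρ v (h v) = 0) :
    ∑ v ∈ A.erase (q 0), ρ v (reroute q n W h f v) + ∑ v ∈ W, ρ v (f v) ≤
      ∑ j ∈ range n, ρ (q (j + 1)) (q j) + ∑ v ∈ A.erase z, ρ v (f v) := by
  set R := (range (n + 1)).image q
  rw [← Finset.sum_filter_add_sum_filter_not _ (· ∈ R), ← Finset.sum_sdiff hW]
  have hwalk : ∑ v ∈ (A.erase (q 0)).filter (· ∈ R), ρ v (reroute q n W h f v) ≤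
      ∑ j ∈ range n, ρ (q (j + 1)) (q j) :=
    calc _ = ∑ v ∈ (A.erase (q 0)).filter (· ∈ R), ρ v (walkSucc q v) :=
          Finset.sum_congr rfl fun v hv => by
            rw [reroute, Finset.piecewise_eq_of_mem _ _ _ (Finset.mem_filter.1 hv).2]
      _ ≤ ∑ v ∈ R.erase (q 0), ρ v (walkSucc q v) := by
          refine Finset.sum_le_sum_of_subset_of_nonneg (fun v hv => ?_) fun _ _ _ => hρ _ _
          obtain ⟨hv, hvR⟩ := Finset.mem_filter.1 hv
          exact Finset.mem_erase.2 ⟨Finset.ne_of_mem_erase hv, hvR⟩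
      _ ≤ _ := sum_walkSucc_le hρ q n
  have hrest : ∑ v ∈ (A.erase (q 0)).filter (· ∉ R), ρ v (reroute q n W h f v) ≤
      ∑ v ∈ A.erase z \ W, ρ v (f v) := by
    set F := (A.erase (q 0)).filter (· ∉ R)
    calc _ = ∑ v ∈ F, ρ v (W.piecewise h f v) := Finset.sum_congr rfl fun v hv => by
          rw [reroute, Finset.piecewise_eq_of_notMem _ _ _ (Finset.mem_filter.1 hv).2]
      _ = ∑ v ∈ F.filter (· ∉ W), ρ v (f v) := by
          rw [← Finset.sum_filter_add_sum_filter_not F (· ∈ W), Finset.sum_eq_zero, zero_add]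
          · exact Finset.sum_congr rfl fun v hv => by
              rw [Finset.piecewise_eq_of_notMem _ _ _ (Finset.mem_filter.1 hv).2]
          · intro v hv
            rw [Finset.piecewise_eq_of_mem _ _ _ (Finset.mem_filter.1 hv).2]
            exact hh v (Finset.mem_filter.1 hv).2
      _ ≤ _ := by
          refine Finset.sum_le_sum_of_subset_of_nonneg (fun v hv => ?_) fun _ _ _ => hρ _ _
          simp only [F, Finset.mem_filter, Finset.mem_erase, Finset.mem_sdiff] at hv ⊢
          exact ⟨⟨fun hvz => hv.1.2 (hvz ▸ hz), hv.1.1.2⟩, hv.2⟩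
  linarith

end Walks

section Colorings

variable {V : Type*} [DecidableEq V]

lemma swap_self (x : V → ℤ) (i : V) : swap x i i = x := by
  funext v; by_cases h : v = i <;> simp [swap, h]

lemma swap_swap (x : V → ℤ) (i j : V) : swap (swap x i j) i j = x := by
  funext v; by_cases hi : v = i <;> by_cases hj : v = j <;> simp_all [swap]

lemma swap_eq_comp (x : V → ℤ) (i j : V) : swap x i j = x ∘ Equiv.swap i j := by
  funext v
  by_cases hi : v = i <;> by_cases hj : v = j <;> simp_all [swap, Equiv.swap_apply_of_ne_of_ne]

variable {D : (V × V) → (V × V) → ℝ} {s t : (V → ℤ) × (V × V)}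

lemma Adm.stay (h : Adm D s t) : Adm D s (s.1, t.2) := ⟨h.1, Or.inl rfl⟩

lemma Adm.reverse (h : Adm D s t) {ℓ : V × V} (hℓ : 0 < D ℓ t.2) :
    Adm D (t.1, ℓ) (s.1, t.2) := by
  refine ⟨hℓ, h.2.imp Eq.symm fun ht => ?_⟩
  rw [ht, swap_swap]

variable [Fintype V] {x : V → ℤ} {i j : V} {k : ℕ}

lemma mem_colorings : x ∈ colorings V ↔ IsColoring x := by
  simp [colorings, IsColoring, Fintype.mem_piFinset]

lemma mem_Omega : s ∈ Omega V k ↔ s.1 ∈ colorings V ∧ plusCount s.1 = k := by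
  simp [Omega, and_comm]

lemma plusCount_swap : plusCount (swap x i j) = plusCount x := by
  rw [swap_eq_comp, plusCount, plusCount]
  exact Finset.card_bij' (fun v _ => Equiv.swap i j v) (fun v _ => Equiv.swap i j v)
    (by simp) (by simp) (by simp) (by simp)

lemma swap_mem_Omega (hs : s ∈ Omega V k) (i j : V) (e : V × V) :
    (swap s.1 i j, e) ∈ Omega V k := by
  rw [mem_Omega, mem_colorings, plusCount_swap] at *
  exact ⟨fun v => by dsimp only [swap]; split_ifs <;> apply hs.1, hs.2⟩

lemma mk_mem_Omega (hs : s ∈ Omega V k) (e : V × V) : (s.1, e) ∈ Omega V k := by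
  rw [mem_Omega] at *
  exact hs

end Colorings

section Bichromatic

variable {V : Type*} [Fintype V] (G : SimpleGraph V) (x : V → ℤ)

def bichromDeg (u : V) : ℕ := (univ.filter fun v => G.Adj u v ∧ x v ≠ x u).card

def bichromGraph : SimpleGraph V where
  Adj u v := G.Adj u v ∧ x u ≠ x v
  symm := ⟨fun _ _ h => ⟨h.1.symm, h.2.symm⟩⟩
  loopless := ⟨fun v h => G.loopless.irrefl v h.1⟩

lemma two_mul_bichromCount : 2 * bichromCount G x = ∑ u, bichromDeg G x u := by
  have hE : bichromCount G x = (bichromGraph G x).edgeFinset.card := by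
    unfold bichromCount
    congr 1
    ext e
    induction e using Sym2.ind
    rw [Finset.mem_filter, SimpleGraph.mem_edgeFinset, SimpleGraph.mem_edgeFinset,
      SimpleGraph.mem_edgeSet, SimpleGraph.mem_edgeSet]
    rfl
  rw [hE, ← (bichromGraph G x).sum_degrees_eq_twice_card_edges]
  refine Finset.sum_congr rfl fun u _ => ?_
  rw [← SimpleGraph.card_neighborFinset_eq_degree, bichromDeg]
  congr 1
  ext v
  rw [SimpleGraph.mem_neighborFinset, Finset.mem_filter]
  simp [bichromGraph, eq_comm]

variable {G x} [DecidableEq V] {i j : V}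

lemma bichromCount_swap_sub (hij : i ≠ j) :
    (bichromCount G (swap x i j) : ℤ) - bichromCount G x =
      ((bichromDeg G (swap x i j) i : ℤ) - bichromDeg G x i) +
        ((bichromDeg G (swap x i j) j : ℤ) - bichromDeg G x j) := by
  set y := swap x i j
  let χ : (V → ℤ) → V → V → ℤ := fun z u v => if G.Adj u v ∧ z v ≠ z u then 1 else 0
  have hdeg : ∀ z u, (bichromDeg G z u : ℤ) = ∑ v, χ z u v := fun z u => by
    simp only [bichromDeg, Finset.card_filter, Nat.cast_sum, Nat.cast_ite, Nat.cast_one,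
      Nat.cast_zero, χ]
  have hcount : ∀ z, 2 * (bichromCount G z : ℤ) = ∑ u, (bichromDeg G z u : ℤ) := fun z => by
    exact_mod_cast two_mul_bichromCount G z
  have hsum := Finset.sum_sum_eq_two_nsmul_of_symm (P := {i, j})
    (d := fun u v => χ y u v - χ x u v) (fun u v => ?_) (fun u hu v hv => ?_) (fun u hu v hv => ?_)
  · simp only [Finset.sum_sub_distrib, Finset.sum_pair hij, ← hdeg, ← hcount, nsmul_eq_mul,
      Nat.cast_ofNat] at hsum
    linarith
  · simp only [χ, G.adj_comm u v, ne_comm]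
  · simp only [Finset.mem_insert, Finset.mem_singleton, not_or] at hu hv
    simp [χ, y, swap, hu.1, hu.2, hv.1, hv.2]
  · simp only [Finset.mem_insert, Finset.mem_singleton] at hu hv
    rcases hu with rfl | rfl <;> rcases hv with rfl | rfl <;>
      simp [χ, y, swap, Ne.symm hij, ne_comm]

end Bichromatic

section Resistance

variable {V : Type*} [Fintype V] [DecidableEq V] {G : SimpleGraph V} {r : ℝ} {εc : V → ℝ}
  {D : (V × V) → (V × V) → ℝ} {x y : V → ℤ} {e : V × V} {s t : (V → ℤ) × (V × V)}

/-- The model is a potential game, with potential `-2 r B`. -/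
lemma util_add_util_sub_swap (G : SimpleGraph V) (r : ℝ) (εc : V → ℝ) (x : V → ℤ) (i j : V) :
    util G r εc x i + util G r εc x j - (util G r εc (swap x i j) i + util G r εc (swap x i j) j)
      = 2 * r * ((bichromCount G (swap x i j) : ℝ) - bichromCount G x) := by
  obtain rfl | hij := eq_or_ne i j
  · simp [swap_self]
  have hdeg : ∀ z u, wdeg G z u + 2 * bichromDeg G z u = (univ.filter (G.Adj u ·)).card := by
    intro z u
    have h := Finset.card_filter_add_card_filter_not (s := univ.filter (G.Adj u ·))
      (p := fun v => z v = z u)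
    simp only [Finset.filter_filter] at h
    simp only [wdeg, bichromDeg, ne_eq]
    omega
  have key : wdeg G x i + wdeg G x j - (wdeg G (swap x i j) i + wdeg G (swap x i j) j) =
      2 * ((bichromCount G (swap x i j) : ℤ) - bichromCount G x) := by
    linarith [bichromCount_swap_sub (G := G) (x := x) hij, hdeg x i, hdeg x j,
      hdeg (swap x i j) i, hdeg (swap x i j) j]
  have key' := congrArg (Int.cast : ℤ → ℝ) key
  push_cast at key'
  simp only [util]
  linear_combination r * key'

lemma resist_self (x : V → ℤ) (e : V × V) :
    resist G r εc x e x =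
      max 0 (2 * r * ((bichromCount G x : ℝ) - bichromCount G (swap x e.1 e.2))) := by
  have := util_add_util_sub_swap G r εc x e.1 e.2
  simp only [resist, ↓reduceIte]
  congr 1
  linarith

lemma resist_of_eq_swap (hy : y = swap x e.1 e.2) (hyx : y ≠ x) :
    resist G r εc x e y = max 0 (2 * r * ((bichromCount G y : ℝ) - bichromCount G x)) := by
  subst hy
  simp only [resist, if_neg hyx, util_add_util_sub_swap]

lemma tres_nonneg (s t : (V → ℤ) × (V × V)) : 0 ≤ tres G r εc s t := by
  simp only [tres, resist]
  split_ifs <;> exact le_max_left _ _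

lemma max_zero_two_mul_sub_eq_zero (hr : 0 ≤ r) {a b : ℝ} (h : a ≤ b) :
    max 0 (2 * r * (a - b)) = 0 :=
  max_eq_left (mul_nonpos_of_nonneg_of_nonpos (by positivity) (sub_nonpos.2 h))

lemma tres_reverse (h : Adm D s t) (ℓ : V × V) :
    tres G r εc (t.1, ℓ) (s.1, t.2) =
      tres G r εc s t + 2 * r * ((bichromCount G s.1 : ℝ) - bichromCount G t.1) := by
  simp only [tres]
  by_cases hts : t.1 = s.1
  · rw [hts]
    ring
  have ht : t.1 = swap s.1 t.2.1 t.2.2 := h.2.resolve_left hts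
  rw [resist_of_eq_swap (by rw [ht, swap_swap]) (Ne.symm hts), resist_of_eq_swap ht hts,
    show 2 * r * ((bichromCount G t.1 : ℝ) - bichromCount G s.1) =
      -(2 * r * ((bichromCount G s.1 : ℝ) - bichromCount G t.1)) by ring, max_comm 0, max_comm 0]
  linarith [max_zero_sub_eq_self (2 * r * ((bichromCount G s.1 : ℝ) - bichromCount G t.1))]

end Resistance

section CostlyStays

variable {V : Type*} [Fintype V] [DecidableEq V] {G : SimpleGraph V} {r : ℝ} {εc : V → ℝ}
  {D : (V × V) → (V × V) → ℝ} {k : ℕ} {s t X : (V → ℤ) × (V × V)}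
  {f : (V → ℤ) × (V × V) → (V → ℤ) × (V × V)}

/-- For `r > 0`, exactly the stays of positive resistance. -/
def IsCostlyStay (G : SimpleGraph V) (s t : (V → ℤ) × (V × V)) : Prop :=
  t.1 = s.1 ∧ bichromCount G (swap s.1 t.2.1 t.2.2) < bichromCount G s.1

def freeStep (G : SimpleGraph V) (r : ℝ) (εc : V → ℝ)
    (f : (V → ℤ) × (V × V) → (V → ℤ) × (V × V)) (s : (V → ℤ) × (V × V)) :
    (V → ℤ) × (V × V) :=
  if tres G r εc s (f s) = 0 then f s else (s.1, (f s).2)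

lemma freeStep_eq_or : freeStep G r εc f s = f s ∨ freeStep G r εc f s = (s.1, (f s).2) := by
  unfold freeStep
  split_ifs
  exacts [Or.inl rfl, Or.inr rfl]

lemma tres_freeStep (hr : 0 ≤ r) (h : Adm D s (f s)) (hs : ¬ IsCostlyStay G s (f s)) :
    tres G r εc s (freeStep G r εc f s) = 0 := by
  unfold freeStep
  split_ifs with h0
  · exact h0
  have hstay : tres G r εc s (s.1, (f s).2) =
      max 0 (2 * r * ((bichromCount G s.1 : ℝ) - bichromCount G (swap s.1 (f s).2.1 (f s).2.2))) :=
    resist_self _ _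
  rw [hstay]
  by_cases hts : (f s).1 = s.1
  · exact max_zero_two_mul_sub_eq_zero hr (by exact_mod_cast not_lt.1 fun hlt => hs ⟨hts, hlt⟩)
  have ht := h.2.resolve_left hts
  rw [← ht]
  refine max_zero_two_mul_sub_eq_zero hr (not_lt.1 fun hlt => h0 ?_)
  exact (resist_of_eq_swap ht hts).trans (max_zero_two_mul_sub_eq_zero hr hlt.le)

variable (G) in
def costlyStays (A : Finset ((V → ℤ) × (V × V))) (X : (V → ℤ) × (V × V))
    (f : (V → ℤ) × (V × V) → (V → ℤ) × (V × V)) : Finset ((V → ℤ) × (V × V)) :=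
  (A.erase X).filter fun v => IsCostlyStay G v (f v)

/-- A costly stay `v → t` is removed by redirecting `v` to the state `u` of the swap it declines:
directly if `u` does not route back through `v`, which saves the stay's resistance, and otherwise
as `v → u → t`, where the swap back `u → t` costs what the stay cost and `u`'s old edge is
dropped. -/
lemma exists_parentMap_of_mem_costlyStays (hr : 0 < r) (hD : ∀ e, 0 < D e e)
    (hf : IsParentMap (Adm D) (Omega V k) X f) (hfX : f X = X) {v : (V → ℤ) × (V × V)}
    (hv : v ∈ costlyStays G (Omega V k) X f) :
    ∃ g, IsParentMap (Adm D) (Omega V k) X g ∧ g X = X ∧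
      (treeRes (tres G r εc) (treeOf (Omega V k) X g) <
          treeRes (tres G r εc) (treeOf (Omega V k) X f) ∨
        treeRes (tres G r εc) (treeOf (Omega V k) X g) ≤
            treeRes (tres G r εc) (treeOf (Omega V k) X f) ∧
          #(costlyStays G (Omega V k) X g) < #(costlyStays G (Omega V k) X f)) := by
  simp only [treeRes_treeOf]
  obtain ⟨hvAX, hstay, hBv⟩ := Finset.mem_filter.1 hv
  obtain ⟨hvX, hvA⟩ := Finset.mem_erase.1 hvAX
  set t := f v
  set u : (V → ℤ) × (V × V) := (swap v.1 t.2.1 t.2.2, t.2)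
  have hvt : Adm D v t := hf.adm v hvA hvX
  have huA : u ∈ Omega V k := swap_mem_Omega hvA _ _ _
  have hBu : (bichromCount G u.1 : ℝ) < bichromCount G v.1 := by exact_mod_cast hBv
  have huv : u.1 ≠ v.1 := fun h => hBu.ne (by rw [h])
  have hvu : Adm D v u := ⟨hvt.1, Or.inr rfl⟩
  have hρvu : tres G r εc v u = 0 :=
    (resist_of_eq_swap rfl huv).trans (max_zero_two_mul_sub_eq_zero hr.le hBu.le)
  have hρvt : tres G r εc v t = 2 * r * ((bichromCount G v.1 : ℝ) - bichromCount G u.1) := by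
    rw [tres, hstay, resist_self]
    exact max_eq_right (by have := mul_pos (mul_pos two_pos hr) (sub_pos.2 hBu); linarith)
  have hcost := sum_update_add (tres G r εc) f hvAX u
  by_cases hloop : Reaches f u v
  · have huX : u ≠ X := fun h => hvX ((h ▸ hloop).eq_of_isFixedPt hfX)
    have hu_ne_v : u ≠ v := fun h => huv (congrArg Prod.fst h)
    have hρut : tres G r εc u t = tres G r εc v t := by
      have h := tres_reverse (G := G) (r := r) (εc := εc) hvu u.2
      rwa [hρvu, zero_add, ← hρvt, show (v.1, u.2) = t from Prod.ext hstay.symm rfl] at h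
    set g := Function.update (Function.update f v u) u t
    have hgv : g v = u := (Function.update_of_ne hu_ne_v.symm _ _).trans (Function.update_self ..)
    have hgu : g u = t := Function.update_self ..
    refine ⟨g, hf.update_update hfX hvA hvX huA hu_ne_v hvu
      ⟨hD _, Or.inr (by rw [hstay, swap_swap])⟩ hloop,
      (Function.update_of_ne huX.symm _ _).trans ((Function.update_of_ne hvX.symm _ _).trans hfX),
      Or.inr ⟨?_, ?_⟩⟩
    · have hcost' := sum_update_add (tres G r εc) (Function.update f v u)
        (Finset.mem_erase.2 ⟨huX, huA⟩) t
      rw [Function.update_of_ne hu_ne_v, hρut] at hcost'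
      linarith [tres_nonneg (G := G) (r := r) (εc := εc) u (f u)]
    · refine (Finset.card_le_card fun w hw => ?_).trans_lt (Finset.card_erase_lt_of_mem hv)
      obtain ⟨hwAX, hwstay, hwB⟩ := Finset.mem_filter.1 hw
      have hwv : w ≠ v := by rintro rfl; exact huv (hgv ▸ hwstay)
      have hwu : w ≠ u := by rintro rfl; exact huv (hstay ▸ hgu ▸ hwstay).symm
      have hgw : g w = f w := (Function.update_of_ne hwu _ _).trans (Function.update_of_ne hwv _ _)
      rw [hgw] at hwstay hwB
      exact Finset.mem_erase.2 ⟨hwv, Finset.mem_filter.2 ⟨hwAX, hwstay, hwB⟩⟩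
  · refine ⟨_, hf.update hvA huA hvu hloop, (Function.update_of_ne hvX.symm _ _).trans hfX,
      Or.inl ?_⟩
    rw [hρvu] at hcost
    linarith [mul_pos (mul_pos two_pos hr) (sub_pos.2 hBu)]

lemma exists_parentMap_costlyStays_eq_empty (hr : 0 < r) (hD : ∀ e, 0 < D e e) {c : ℝ}
    (hmin : ∀ g, IsParentMap (Adm D) (Omega V k) X g →
      c ≤ treeRes (tres G r εc) (treeOf (Omega V k) X g))
    (hf : IsParentMap (Adm D) (Omega V k) X f) (hfX : f X = X)
    (hfc : treeRes (tres G r εc) (treeOf (Omega V k) X f) ≤ c) :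
    ∃ g, IsParentMap (Adm D) (Omega V k) X g ∧
      treeRes (tres G r εc) (treeOf (Omega V k) X g) ≤ c ∧ costlyStays G (Omega V k) X g = ∅ := by
  induction hn : #(costlyStays G (Omega V k) X f) using Nat.strong_induction_on generalizing f
    with | _ n ih =>
  obtain hempty | ⟨v, hv⟩ := (costlyStays G (Omega V k) X f).eq_empty_or_nonempty
  · exact ⟨f, hf, hfc, hempty⟩
  obtain ⟨g, hg, hgX, hlt | ⟨hle, hcard⟩⟩ :=
    exists_parentMap_of_mem_costlyStays (εc := εc) hr hD hf hfX hv
  · exact absurd (hmin g hg) (not_le.2 (hlt.trans_le hfc))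
  · exact ih _ (hn ▸ hcard) hg hgX (hle.trans hfc) rfl

end CostlyStays

section Rerooting

variable {V : Type*} {w : ℕ → (V → ℤ) × (V × V)} {m : ℕ}

/-- The walk `w 0 → ⋯ → w m` run backwards, undoing its colorings while replaying its labels. -/
def reverseWalk (w : ℕ → (V → ℤ) × (V × V)) (m : ℕ) : ℕ → (V → ℤ) × (V × V)
  | 0 => w 0
  | i + 1 => ((w i).1, (w (min (i + 1) m)).2)

lemma reverseWalk_succ_of_lt {i : ℕ} (hi : i < m) :
    reverseWalk w m (i + 1) = ((w i).1, (w (i + 1)).2) := by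
  rw [reverseWalk, min_eq_left hi]

lemma reverseWalk_succ_self : reverseWalk w m (m + 1) = w m := by
  rw [reverseWalk, min_eq_right (Nat.le_succ m)]

variable [DecidableEq V] {D : (V × V) → (V × V) → ℝ}

lemma adm_reverseWalk (hDrefl : ∀ e, 0 < D e e) (hDsymm : ∀ e e', 0 < D e e' → 0 < D e' e)
    (hw : ∀ i < m, Adm D (w i) (w (i + 1))) :
    ∀ i ≤ m, Adm D (reverseWalk w m (i + 1)) (reverseWalk w m i) := by
  have hlabel : ∀ i ≤ m, 0 < D (w (min (i + 1) m)).2 (w i).2 := by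
    intro i hi
    rcases hi.lt_or_eq with hi | rfl
    · rw [min_eq_left hi]
      exact hDsymm _ _ (hw i hi).1
    · rw [min_eq_right (Nat.le_succ i)]
      exact hDrefl _
  rintro (_ | i) hi
  · exact ⟨hlabel 0 hi, Or.inl rfl⟩
  · rw [reverseWalk_succ_of_lt hi]
    exact (hw i hi).reverse (hlabel (i + 1) hi)

variable [Fintype V] {G : SimpleGraph V} {r : ℝ} {εc : V → ℝ}

lemma sum_tres_reverseWalk (hr : 0 ≤ r) (hw : ∀ i < m, Adm D (w i) (w (i + 1)))
    (h0 : bichromCount G (w 0).1 ≤ bichromCount G (swap (w 0).1 (w 0).2.1 (w 0).2.2)) :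
    ∑ i ∈ range (m + 1), tres G r εc (reverseWalk w m (i + 1)) (reverseWalk w m i) =
      ∑ i ∈ range m, tres G r εc (w i) (w (i + 1)) +
        2 * r * ((bichromCount G (w 0).1 : ℝ) - bichromCount G (w m).1) := by
  have hfirst : tres G r εc (reverseWalk w m 1) (reverseWalk w m 0) = 0 :=
    (resist_self _ _).trans (max_zero_two_mul_sub_eq_zero hr (by exact_mod_cast h0))
  have hstep : ∀ i ∈ range m, tres G r εc (reverseWalk w m (i + 1 + 1)) (reverseWalk w m (i + 1)) =
      tres G r εc (w i) (w (i + 1)) + (2 * r * (bichromCount G (w i).1 : ℝ) -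
        2 * r * (bichromCount G (w (i + 1)).1 : ℝ)) := by
    intro i hi
    rw [reverseWalk_succ_of_lt (Finset.mem_range.1 hi), ← mul_sub]
    exact tres_reverse (hw i (Finset.mem_range.1 hi)) _
  rw [Finset.sum_range_succ', hfirst, add_zero, Finset.sum_congr rfl hstep,
    Finset.sum_add_distrib, Finset.sum_range_sub' (fun i => 2 * r * (bichromCount G (w i).1 : ℝ))]
  ring

/-- Reroot at `Y` by sending the path `Y = w 0 → ⋯ → w m = X` backwards along `reverseWalk`; each
state `w i` of the path is re-attached for free, either forwards to `w (i + 1)` or by a stay onto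
the walk, which is possible because the tree has no costly stays. -/
lemma exists_parentMap_reroot (hr : 0 ≤ r) (hDrefl : ∀ e, 0 < D e e)
    (hDsymm : ∀ e e', 0 < D e e' → 0 < D e' e) {k : ℕ} {X Y : (V → ℤ) × (V × V)}
    {f : (V → ℤ) × (V × V) → (V → ℤ) × (V × V)} (hf : IsParentMap (Adm D) (Omega V k) X f)
    (hfree : costlyStays G (Omega V k) X f = ∅) (hY : Y ∈ Omega V k)
    (hYmin : ∀ s ∈ Omega V k, bichromCount G Y.1 ≤ bichromCount G s.1) :
    ∃ g, IsParentMap (Adm D) (Omega V k) Y g ∧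
      treeRes (tres G r εc) (treeOf (Omega V k) Y g) ≤
        treeRes (tres G r εc) (treeOf (Omega V k) X f) +
          2 * r * ((bichromCount G Y.1 : ℝ) - bichromCount G X.1) := by
  set A := Omega V k
  obtain ⟨m, hmX, hwA, hwX, hinj⟩ := hf.exists_path hY
  set w : ℕ → (V → ℤ) × (V × V) := fun i => f^[i] Y
  have hstep : ∀ i, f (w i) = w (i + 1) := fun i => (Function.iterate_succ_apply' f i Y).symm
  have hwAdm : ∀ i < m, Adm D (w i) (w (i + 1)) := fun i hi =>
    hstep i ▸ hf.adm _ (hwA i hi.le) (hwX i hi)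
  set q := reverseWalk w m with hq
  have hqX : q (m + 1) = X := reverseWalk_succ_self.trans hmX
  have hqA : ∀ i ≤ m + 1, q i ∈ A := by
    rintro (_ | i) hi
    exacts [hY, mk_mem_Omega (hwA i (by omega)) _]
  have hfree_w : ∀ i < m, freeStep G r εc f (w i) ∈ A ∧ Adm D (w i) (freeStep G r εc f (w i)) ∧
      (freeStep G r εc f (w i) = w (i + 1) ∨
        freeStep G r εc f (w i) ∈ (range (m + 1 + 1)).image q) := by
    intro i hi
    rcases freeStep_eq_or (G := G) (r := r) (εc := εc) (f := f) (s := w i) with h | h <;>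
      rw [h, hstep]
    · exact ⟨hwA _ hi, hwAdm i hi, Or.inl rfl⟩
    · refine ⟨mk_mem_Omega (hwA i hi.le) _, (hwAdm i hi).stay, Or.inr ?_⟩
      exact Finset.mem_image.2 ⟨i + 1, Finset.mem_range.2 (by omega), reverseWalk_succ_of_lt hi⟩
  have hfree_zero : ∀ v ∈ (range m).image w, tres G r εc v (freeStep G r εc f v) = 0 := by
    intro v hv
    obtain ⟨i, hi, rfl⟩ := Finset.mem_image.1 hv
    have hi := Finset.mem_range.1 hi
    refine tres_freeStep hr (hf.adm _ (hwA i hi.le) (hwX i hi)) fun hc => ?_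
    have h : w i ∈ costlyStays G A X f :=
      Finset.mem_filter.2 ⟨Finset.mem_erase.2 ⟨hwX i hi, hwA i hi.le⟩, hc⟩
    rw [hfree] at h
    exact Finset.notMem_empty _ h
  refine ⟨reroute q (m + 1) ((range m).image w) (freeStep G r εc f) f, hf.reroute hqA
    (fun i hi => adm_reverseWalk hDrefl hDsymm hwAdm i (by omega)) hqX hmX hfree_w, ?_⟩
  have hcost := sum_reroute_le (f := f) tres_nonneg q
    (hqX ▸ Finset.mem_image_of_mem q (Finset.self_mem_range_succ _)) (fun v hv => by
      obtain ⟨i, hi, rfl⟩ := Finset.mem_image.1 hv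
      exact Finset.mem_erase.2 ⟨hwX i (Finset.mem_range.1 hi), hwA i (Finset.mem_range.1 hi).le⟩)
    hfree_zero
  have hwalk := sum_tres_reverseWalk (G := G) (εc := εc) hr hwAdm
    (hYmin _ (swap_mem_Omega hY _ _ Y.2))
  have hpath : ∑ v ∈ (range m).image w, tres G r εc v (f v) =
      ∑ i ∈ range m, tres G r εc (w i) (w (i + 1)) := by
    rw [Finset.sum_image fun i hi j hj h => hinj (Set.mem_Iic.2 (Finset.mem_range.1 hi).le)
      (Set.mem_Iic.2 (Finset.mem_range.1 hj).le) h]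
    simp only [hstep]
  rw [treeRes_treeOf, treeRes_treeOf]
  rw [show w m = X from hmX, show w 0 = Y from rfl, ← hq] at hwalk
  rw [show q 0 = Y from rfl] at hcost
  linarith

end Rerooting

theorem tree_replacement_general
    (N : ℕ) [NeZero N] (r : ℝ) (hr : 0 < r)
    (εc : ZMod N × ZMod N → ℝ)
    (D : ((ZMod N × ZMod N) × (ZMod N × ZMod N)) →
         ((ZMod N × ZMod N) × (ZMod N × ZMod N)) → ℝ)
    (hD : IsScheduler D)
    (k : ℕ)
    (Y X : ((ZMod N × ZMod N) → ℤ) × ((ZMod N × ZMod N) × (ZMod N × ZMod N)))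
    (hY : Y ∈ Omega (ZMod N × ZMod N) k) (hX : X ∈ Omega (ZMod N × ZMod N) k)
    (hYseg : MaximallySegregated (torus N) Y.1)
    (T : Finset ((((ZMod N × ZMod N) → ℤ) × ((ZMod N × ZMod N) × (ZMod N × ZMod N))) ×
                 (((ZMod N × ZMod N) → ℤ) × ((ZMod N × ZMod N) × (ZMod N × ZMod N)))))
    (hT : IsTreeRootedAt (Adm D) (Omega (ZMod N × ZMod N) k) T X)
    (hTmin : ∀ T', IsTreeRootedAt (Adm D) (Omega (ZMod N × ZMod N) k) T' X →
      treeRes (tres (torus N) r εc) T ≤ treeRes (tres (torus N) r εc) T') :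
    ∃ T', IsTreeRootedAt (Adm D) (Omega (ZMod N × ZMod N) k) T' Y ∧
      treeRes (tres (torus N) r εc) T' ≤ treeRes (tres (torus N) r εc) T ∧
      (¬ MaximallySegregated (torus N) X.1 →
        treeRes (tres (torus N) r εc) T' < treeRes (tres (torus N) r εc) T) := by
  obtain rfl | hYX := eq_or_ne Y X
  · exact ⟨T, hT, le_rfl, fun hXseg => absurd hYseg hXseg⟩
  have hYmin : ∀ s ∈ Omega (ZMod N × ZMod N) k,
      bichromCount (torus N) Y.1 ≤ bichromCount (torus N) s.1 := fun s hs => by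
    rw [mem_Omega, mem_colorings] at hs
    exact hYseg s.1 hs.1 (by rw [hs.2, (mem_Omega.1 hY).2])
  obtain ⟨f₀, hf₀, hf₀X, rfl⟩ := hT.exists_parentMap hY hYX
  obtain ⟨f, hf, hff₀, hfree⟩ := exists_parentMap_costlyStays_eq_empty hr hD.2.2.1
    (fun g hg => hTmin _ hg.isTreeRootedAt) hf₀ hf₀X le_rfl
  obtain ⟨g, hg, hgf⟩ := exists_parentMap_reroot hr.le hD.2.2.1 (fun e e' => (hD.2.2.2.1 e e').1)
    hf hfree hY hYmin
  have hpot : 2 * r * ((bichromCount (torus N) Y.1 : ℝ) - bichromCount (torus N) X.1) ≤ 0 :=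
    mul_nonpos_of_nonneg_of_nonpos (by positivity) (sub_nonpos.2 (by exact_mod_cast hYmin X hX))
  refine ⟨treeOf _ Y g, hg.isTreeRootedAt, by linarith, fun hXseg => ?_⟩
  obtain ⟨x, hx, hxk, hlt⟩ : ∃ x, IsColoring x ∧ plusCount x = plusCount X.1 ∧
      bichromCount (torus N) x < bichromCount (torus N) X.1 := by
    simpa [MaximallySegregated] using hXseg
  have hYX : (bichromCount (torus N) Y.1 : ℝ) < bichromCount (torus N) X.1 := by
    exact_mod_cast (hYmin (x, X.2) (mem_Omega.2 ⟨mem_colorings.2 hx,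
      hxk.trans (mem_Omega.1 hX).2⟩)).trans_lt hlt
  have := mul_pos (mul_pos two_pos hr) (sub_pos.2 hYX)
  linarith

/-- **Tree replacement lemma.** Let `Y ∈ Ω_k` have a maximally segregated
coloring, let `X ∈ Ω_k` be any state, and let `T` be a tree rooted at `X` (within `Ω_k`)
of minimal resistance among trees rooted at `X`. Then some tree rooted at `Y` has
resistance at most that of `T`, strictly less if the coloring of `X` is not maximally
segregated. -/
theorem tree_replacement
    (N : ℕ) [NeZero N] (hN : 2 ≤ N) (r : ℝ) (hr : 0 < r)
    (εc : ZMod N × ZMod N → ℝ)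
    (D : ((ZMod N × ZMod N) × (ZMod N × ZMod N)) →
         ((ZMod N × ZMod N) × (ZMod N × ZMod N)) → ℝ)
    (hD : IsScheduler D)
    (k : ℕ) (hk : k ≤ N ^ 2)
    (Y X : ((ZMod N × ZMod N) → ℤ) × ((ZMod N × ZMod N) × (ZMod N × ZMod N)))
    (hY : Y ∈ Omega (ZMod N × ZMod N) k) (hX : X ∈ Omega (ZMod N × ZMod N) k)
    (hYseg : MaximallySegregated (torus N) Y.1)
    (T : Finset ((((ZMod N × ZMod N) → ℤ) × ((ZMod N × ZMod N) × (ZMod N × ZMod N))) ×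
                 (((ZMod N × ZMod N) → ℤ) × ((ZMod N × ZMod N) × (ZMod N × ZMod N)))))
    (hT : IsTreeRootedAt (Adm D) (Omega (ZMod N × ZMod N) k) T X)
    (hTmin : ∀ T', IsTreeRootedAt (Adm D) (Omega (ZMod N × ZMod N) k) T' X →
      treeRes (tres (torus N) r εc) T ≤ treeRes (tres (torus N) r εc) T') :
    ∃ T', IsTreeRootedAt (Adm D) (Omega (ZMod N × ZMod N) k) T' Y ∧
      treeRes (tres (torus N) r εc) T' ≤ treeRes (tres (torus N) r εc) T ∧
      (¬ MaximallySegregated (torus N) X.1 →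
        treeRes (tres (torus N) r εc) T' < treeRes (tres (torus N) r εc) T) :=
  tree_replacement_general N r hr εc D hD k Y X hY hX hYseg T hT hTmin

end Schelling
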